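/- For any fluid model solution n(·), the function t ↦ H(n(t)) is nonincreasing on [0,∞). -/

import Mathlib

open Real Set

noncomputable section

/-- Feasible set for the bandwidth allocation problem at state `n`: the vector
`Λ⁺ = (Λ_i : i ∈ I₊(n))` is embedded in `ℝ^I` by requiring `L i = 0` whenever `n i = 0`. -/
def Feasible {I J : ℕ} (A : Fin J → Fin I → ℝ) (C : Fin J → ℝ)
    (n : Fin I → ℝ) : Set (Fin I → ℝ) :=
  {L | (∀ i, 0 ≤ L i) ∧ (∀ i, n i = 0 → L i = 0) ∧ ∀ j, ∑ i, A j i * L i ≤ C j}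

/-- The objective `G_n(Λ⁺)`, taking the value `⊥ = -∞` when `α ≥ 1` and some
coordinate of `Λ⁺` in `I₊(n)` vanishes. -/
def Gfun {I : ℕ} (α : ℝ) (κ : Fin I → ℝ) (n L : Fin I → ℝ) : EReal :=
  if 1 ≤ α ∧ ∃ i, 0 < n i ∧ L i = 0 then ⊥
  else if α = 1 then
    ((∑ i, if 0 < n i then κ i * n i * Real.log (L i) else 0 : ℝ) : EReal)
  else
    ((∑ i, if 0 < n i then κ i * n i ^ α * L i ^ (1 - α) / (1 - α) else 0 : ℝ) : EReal)

/-- `L` is an optimal weighted α-fair bandwidth allocation for the state `n`,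
i.e. a maximizer of `G_n` over the feasible set for `n` (with `L i = 0` for `i ∈ I₀(n)`). -/
def IsAlloc {I J : ℕ} (A : Fin J → Fin I → ℝ) (C : Fin J → ℝ) (α : ℝ)
    (κ : Fin I → ℝ) (n L : Fin I → ℝ) : Prop :=
  L ∈ Feasible A C n ∧ ∀ L' ∈ Feasible A C n, Gfun α κ n L' ≤ Gfun α κ n L

/-- `f` is absolutely continuous on `[0, T]` for every `T > 0` (ε-δ definition with
finitely many pairwise disjoint subintervals). -/
def AbsContNonneg (f : ℝ → ℝ) : Prop :=
  ∀ T > (0:ℝ), ∀ ε > (0:ℝ), ∃ δ > (0:ℝ), ∀ (m : ℕ) (a b : Fin m → ℝ),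
    (∀ k, 0 ≤ a k ∧ a k ≤ b k ∧ b k ≤ T) →
    (∀ k l, k < l → b k ≤ a l ∨ b l ≤ a k) →
    (∑ k, (b k - a k)) < δ → (∑ k, |f (b k) - f (a k)|) < ε

/-- Fluid model solution: `n : [0,∞) → ℝ₊^I` absolutely continuous, and at every
regular point `t` the derivative conditions (13) and capacity condition (14) hold. -/
def IsFluidSol {I J : ℕ} (A : Fin J → Fin I → ℝ) (C : Fin J → ℝ)
    (ν μ : Fin I → ℝ) (Λ : (Fin I → ℝ) → Fin I → ℝ)
    (n : ℝ → Fin I → ℝ) : Prop :=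
  (∀ i, AbsContNonneg fun t => n t i) ∧
  (∀ t ∈ Ici (0:ℝ), ∀ i, 0 ≤ n t i) ∧
  ∀ t ∈ Ici (0:ℝ),
    (∀ i, DifferentiableWithinAt ℝ (fun s => n s i) (Ici 0) t) →
    (∀ i, (0 < n t i →
        HasDerivWithinAt (fun s => n s i) (ν i - μ i * Λ (n t) i) (Ici 0) t) ∧
      (n t i = 0 → HasDerivWithinAt (fun s => n s i) 0 (Ici 0) t)) ∧
    ∀ j, (∑ i, A j i * (if 0 < n t i then Λ (n t) i else ν i / μ i)) ≤ C j

/-- The set `J*` of critically loaded resources. -/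
def Jstar {I J : ℕ} (A : Fin J → Fin I → ℝ) (C : Fin J → ℝ)
    (ν μ : Fin I → ℝ) : Set (Fin J) :=
  {j | ∑ i, A j i * (ν i / μ i) = C j}

/-- The workload map `w(n)`. -/
def wl {I J : ℕ} (A : Fin J → Fin I → ℝ) (μ : Fin I → ℝ)
    (n : Fin I → ℝ) : Fin J → ℝ :=
  fun j => ∑ i, A j i * n i / μ i

/-- Feasible set of the workload optimization problem (22) for workload `w`. -/
def WFeasible {I J : ℕ} (A : Fin J → Fin I → ℝ) (C : Fin J → ℝ)
    (ν μ : Fin I → ℝ) (w : Fin J → ℝ) : Set (Fin I → ℝ) :=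
  {m | (∀ i, 0 ≤ m i) ∧ ∀ j ∈ Jstar A C ν μ, w j ≤ ∑ i, A j i * m i / μ i}

/-- The Lyapunov function `F`. -/
def Ffun {I : ℕ} (α : ℝ) (κ ν μ : Fin I → ℝ) (n : Fin I → ℝ) : ℝ :=
  (1 / (α + 1)) * ∑ i, ν i * κ i * μ i ^ (α - 1) * (n i / ν i) ^ (α + 1)

/-- The function `K` (the derivative of `F` along fluid model solutions). -/
def Kfun {I : ℕ} (α : ℝ) (κ ν μ : Fin I → ℝ)
    (Λ : (Fin I → ℝ) → Fin I → ℝ) (n : Fin I → ℝ) : ℝ :=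
  ∑ i, if 0 < n i then κ i * (μ i * n i / ν i) ^ α * (ν i / μ i - Λ n i) else 0

/-!
Along a fluid model solution `F ∘ n` is nonincreasing, while the workloads of the critically
loaded resources are nondecreasing; the latter shrinks the feasible set of the workload problem,
so `F̲ ∘ w ∘ n` is nondecreasing and `H ∘ n = F ∘ n - F̲ ∘ w ∘ n` is nonincreasing.

Both monotonicity statements follow from the fundamental theorem of calculus for absolutely
continuous functions. At almost every time every coordinate of `n` is differentiable; there
`d/dt F(n) = K(n)`, which is `≤ 0` because the tangent line of the concave α-fair utility at the
load `ρᵢ` bounds `K(n)` by `G_n(ρ) - G_n(Λ(n)) ≤ 0`, and `d/dt w_j(n) = C_j - Σᵢ A_ji Λᵢ(n) ≥ 0`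
(with `Λᵢ` replaced by `ρᵢ` on empty routes) by the capacity constraint.
-/

open Filter MeasureTheory Topology

theorem LipschitzOnWith.comp_absolutelyContinuousOnInterval {X Y : Type*}
    [PseudoMetricSpace X] [PseudoMetricSpace Y] {g : X → Y} {K : NNReal} {s : Set X}
    {f : ℝ → X} {a b : ℝ} (hg : LipschitzOnWith K g s)
    (hf : AbsolutelyContinuousOnInterval f a b) (hfs : MapsTo f (uIcc a b) s) :
    AbsolutelyContinuousOnInterval (g ∘ f) a b := by
  unfold AbsolutelyContinuousOnInterval at hf ⊢
  have hK := hf.const_mul (K : ℝ)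
  rw [mul_zero] at hK
  refine squeeze_zero' (Eventually.of_forall fun _ => Finset.sum_nonneg fun _ _ => dist_nonneg)
    ?_ hK
  filter_upwards [mem_inf_of_right (mem_principal_self _)] with E hE
  rw [Finset.mul_sum]
  refine Finset.sum_le_sum fun i hi => hg.dist_le_mul _ (hfs (hE.1 i hi).1) _ (hfs (hE.1 i hi).2)

theorem ContDiff.comp_absolutelyContinuousOnInterval {E F : Type*}
    [NormedAddCommGroup E] [NormedSpace ℝ E] [NormedAddCommGroup F] [NormedSpace ℝ F]
    {g : E → F} {f : ℝ → E} {a b : ℝ} (hg : ContDiff ℝ 1 g)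
    (hf : AbsolutelyContinuousOnInterval f a b) :
    AbsolutelyContinuousOnInterval (g ∘ f) a b := by
  obtain ⟨K, hK⟩ := (hg.locallyLipschitz.locallyLipschitzOn (s := f '' uIcc a b)
    ).exists_lipschitzOnWith_of_compact (isCompact_uIcc.image_of_continuousOn hf.continuousOn)
  exact hK.comp_absolutelyContinuousOnInterval hf (mapsTo_image f _)

theorem absolutelyContinuousOnInterval_pi {ι : Type*} [Fintype ι] {X : ι → Type*}
    [∀ i, PseudoMetricSpace (X i)] {f : ℝ → ∀ i, X i} {a b : ℝ}
    (hf : ∀ i, AbsolutelyContinuousOnInterval (fun t => f t i) a b) :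
    AbsolutelyContinuousOnInterval f a b := by
  unfold AbsolutelyContinuousOnInterval at hf ⊢
  have hsum := tendsto_finsetSum Finset.univ fun i _ => hf i
  rw [Finset.sum_const_zero] at hsum
  refine squeeze_zero (fun _ => Finset.sum_nonneg fun _ _ => dist_nonneg) (fun E => ?_) hsum
  rw [Finset.sum_comm]
  refine Finset.sum_le_sum fun k _ => (dist_pi_le_iff (Finset.sum_nonneg fun _ _ => dist_nonneg)).2
    fun i => Finset.single_le_sum (f := fun i => dist (f (E.2 k).1 i) (f (E.2 k).2 i))
      (fun _ _ => dist_nonneg) (Finset.mem_univ i)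

theorem AbsolutelyContinuousOnInterval.le_of_ae_deriv_nonneg {f : ℝ → ℝ} {a b : ℝ}
    (hf : AbsolutelyContinuousOnInterval f a b) (hab : a ≤ b)
    (hf' : ∀ᵐ x, x ∈ Ioo a b → 0 ≤ deriv f x) : f a ≤ f b := by
  have hf'' : 0 ≤ᵐ[volume.restrict (Icc a b)] deriv f := by
    rw [← Measure.restrict_congr_set Ioo_ae_eq_Icc]
    exact (ae_restrict_iff' measurableSet_Ioo).2 hf'
  have := intervalIntegral.integral_nonneg_of_ae_restrict hab hf''
  rw [hf.integral_deriv_eq_sub] at this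
  linarith

theorem AbsolutelyContinuousOnInterval.le_of_ae_deriv_nonpos {f : ℝ → ℝ} {a b : ℝ}
    (hf : AbsolutelyContinuousOnInterval f a b) (hab : a ≤ b)
    (hf' : ∀ᵐ x, x ∈ Ioo a b → deriv f x ≤ 0) : f b ≤ f a := by
  have := hf.neg.le_of_ae_deriv_nonneg hab <| by
    filter_upwards [hf'] with x hx hxab
    simpa [deriv.neg'] using hx hxab
  simpa using this

theorem le_or_le_of_disjoint_Ioc {α : Type*} [LinearOrder α] {a₁ a₂ b₁ b₂ : α} (ha : a₁ < a₂)
    (hb : b₁ < b₂) (h : Disjoint (Ioc a₁ a₂) (Ioc b₁ b₂)) : a₂ ≤ b₁ ∨ b₂ ≤ a₁ := by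
  rw [Ioc_disjoint_Ioc] at h
  rcases min_le_iff.1 h with h | h <;> rcases le_max_iff.1 h with h' | h'
  · exact absurd h' ha.not_ge
  · exact Or.inl h'
  · exact Or.inr h'
  · exact absurd h' hb.not_ge

theorem AbsContNonneg.absolutelyContinuousOnInterval {f : ℝ → ℝ} (hf : AbsContNonneg f)
    {T : ℝ} (hT : 0 < T) : AbsolutelyContinuousOnInterval f 0 T := by
  rw [absolutelyContinuousOnInterval_iff]
  intro ε hε
  obtain ⟨δ, hδ, hfδ⟩ := hf T hT ε hε
  refine ⟨δ, hδ, fun ⟨m, p⟩ hp hlen => ?_⟩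
  -- degenerate intervals are moved to `(0, 0)`, where they cannot overlap another interval
  let a : Fin m → ℝ := fun k => if (p k).1 = (p k).2 then 0 else min (p k).1 (p k).2
  let b : Fin m → ℝ := fun k => if (p k).1 = (p k).2 then 0 else max (p k).1 (p k).2
  obtain ⟨hends, hdisj⟩ := hp
  simp only [uIcc_of_le hT.le] at hends hlen ⊢
  have hmem : ∀ k : Fin m, (p k).1 ∈ Icc 0 T ∧ (p k).2 ∈ Icc 0 T :=
    fun k => hends k (Finset.mem_range.2 k.2)
  have hlen_eq : ∑ i ∈ Finset.range m, dist (p i).1 (p i).2 = ∑ k, (b k - a k) := by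
    rw [Finset.sum_range]
    refine Finset.sum_congr rfl fun k _ => ?_
    simp only [a, b]
    split_ifs with h
    · simp [h]
    · rw [max_sub_min_eq_abs, Real.dist_eq, abs_sub_comm]
  have hvar_eq : ∑ i ∈ Finset.range m, dist (f (p i).1) (f (p i).2) =
      ∑ k, |f (b k) - f (a k)| := by
    rw [Finset.sum_range]
    refine Finset.sum_congr rfl fun k _ => ?_
    simp only [a, b]
    split_ifs with h
    · simp [h]
    · rw [Real.dist_eq]
      rcases le_total (p k).1 (p k).2 with h' | h'
      · simp [h', abs_sub_comm]
      · simp [h']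
  rw [hvar_eq]
  refine hfδ m a b (fun k => ?_) (fun k l hkl => ?_) (hlen_eq ▸ hlen)
  · simp only [a, b]
    split_ifs
    · simp [hT.le]
    · exact ⟨le_min (hmem k).1.1 (hmem k).2.1, min_le_max, max_le (hmem k).1.2 (hmem k).2.2⟩
  · simp only [a, b]
    split_ifs with hk hl hl
    · simp
    · exact Or.inl (le_min (hmem l).1.1 (hmem l).2.1)
    · exact Or.inr (le_min (hmem k).1.1 (hmem k).2.1)
    · exact le_or_le_of_disjoint_Ioc (min_lt_max.2 hk) (min_lt_max.2 hl)
        (hdisj (Finset.mem_range.2 k.2) (Finset.mem_range.2 l.2)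
          (by simpa [Fin.val_inj] using hkl.ne))

theorem AbsContNonneg.absolutelyContinuousOnInterval_of_nonneg {f : ℝ → ℝ}
    (hf : AbsContNonneg f) {a b : ℝ} (ha : 0 ≤ a) (hb : 0 ≤ b) :
    AbsolutelyContinuousOnInterval f a b := by
  refine (hf.absolutelyContinuousOnInterval (T := max a b + 1) (by positivity)).mono ?_
  rw [uIcc_of_le (by positivity : (0 : ℝ) ≤ max a b + 1)]
  exact uIcc_subset_Icc ⟨ha, by linarith [le_max_left a b]⟩ ⟨hb, by linarith [le_max_right a b]⟩

theorem AbsContNonneg.ae_differentiableAt {f : ℝ → ℝ} (hf : AbsContNonneg f) :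
    ∀ᵐ x, 0 < x → DifferentiableAt ℝ f x := by
  have h : ∀ k : ℕ, ∀ᵐ x, x ∈ uIcc 0 (k : ℝ) → DifferentiableAt ℝ f x := fun k =>
    (hf.absolutelyContinuousOnInterval_of_nonneg le_rfl k.cast_nonneg).ae_differentiableAt
  filter_upwards [ae_all_iff.2 h] with x hx hx0
  exact hx ⌈x⌉₊ (by rw [uIcc_of_le (Nat.cast_nonneg _)]; exact ⟨hx0.le, Nat.le_ceil x⟩)

def alphaFairUtility (α x : ℝ) : ℝ := if α = 1 then log x else x ^ (1 - α) / (1 - α)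

theorem hasDerivAt_alphaFairUtility {α x : ℝ} (hx : 0 < x) :
    HasDerivAt (alphaFairUtility α) (x ^ (-α)) x := by
  unfold alphaFairUtility
  split_ifs with hα
  · subst hα
    simpa [rpow_neg_one] using hasDerivAt_log hx.ne'
  · have hα' : 1 - α ≠ 0 := sub_ne_zero.2 (Ne.symm hα)
    have := (hasDerivAt_rpow_const (p := 1 - α) (Or.inl hx.ne')).div_const (1 - α)
    rwa [sub_sub_cancel_left, mul_div_cancel_left₀ _ hα'] at this

theorem continuousAt_alphaFairUtility {α x : ℝ} (h : 0 < x ∨ α < 1) :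
    ContinuousAt (alphaFairUtility α) x := by
  rcases h with hx | hα
  · exact (hasDerivAt_alphaFairUtility hx).continuousAt
  · rw [show alphaFairUtility α = fun x => x ^ (1 - α) / (1 - α) from
      funext fun x => if_neg hα.ne]
    exact (continuousAt_rpow_const x _ (Or.inr (by linarith))).div_const _

theorem rpow_neg_mul_sub_le_alphaFairUtility_sub {α ρ L : ℝ} (hα : 0 ≤ α) (hρ : 0 < ρ)
    (hL : 0 ≤ L) (hL₁ : 1 ≤ α → 0 < L) :
    ρ ^ (-α) * (ρ - L) ≤ alphaFairUtility α ρ - alphaFairUtility α L := by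
  have hdiff : ∀ {a b : ℝ}, 0 ≤ a → DifferentiableOn ℝ (alphaFairUtility α) (interior (Icc a b)) :=
    fun ha x hx => by
      rw [interior_Icc] at hx
      exact (hasDerivAt_alphaFairUtility (ha.trans_lt hx.1)).differentiableAt.differentiableWithinAt
  have hderiv : ∀ {x}, 0 < x → deriv (alphaFairUtility α) x = x ^ (-α) :=
    fun hx => (hasDerivAt_alphaFairUtility hx).deriv
  rcases le_total L ρ with hLρ | hρL
  · refine (convex_Icc L ρ).mul_sub_le_image_sub_of_le_deriv ?_ (hdiff hL) (fun x hx => ?_)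
      L ⟨le_rfl, hLρ⟩ ρ ⟨hLρ, le_rfl⟩ hLρ
    · refine fun x hx => (continuousAt_alphaFairUtility ?_).continuousWithinAt
      rcases (hL.trans hx.1).lt_or_eq with hx0 | rfl
      · exact Or.inl hx0
      · exact Or.inr (not_le.1 fun h => (hL₁ h).ne' (le_antisymm hx.1 hL))
    · rw [interior_Icc] at hx
      rw [hderiv (hL.trans_lt hx.1)]
      exact rpow_le_rpow_of_nonpos (hL.trans_lt hx.1) hx.2.le (neg_nonpos.2 hα)
  · have := (convex_Icc ρ L).image_sub_le_mul_sub_of_deriv_le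
      (fun x hx => (continuousAt_alphaFairUtility (Or.inl (hρ.trans_le hx.1))).continuousWithinAt)
      (hdiff hρ.le) (C := ρ ^ (-α)) (fun x hx => ?_) ρ ⟨le_rfl, hρL⟩ L ⟨hρL, le_rfl⟩ hρL
    · linarith
    · rw [interior_Icc] at hx
      rw [hderiv (hρ.trans hx.1)]
      exact rpow_le_rpow_of_nonpos hρ hx.1.le (neg_nonpos.2 hα)

theorem Gfun_eq_sum_alphaFairUtility {I : ℕ} {α : ℝ} {κ n L : Fin I → ℝ}
    (h : ¬(1 ≤ α ∧ ∃ i, 0 < n i ∧ L i = 0)) :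
    Gfun α κ n L = ((∑ i, if 0 < n i then κ i * n i ^ α * alphaFairUtility α (L i) else 0 : ℝ)
      : EReal) := by
  rw [Gfun, if_neg h]
  split_ifs with hα
  · subst hα
    simp [alphaFairUtility, rpow_one]
  · simp [alphaFairUtility, hα, mul_div_assoc]

theorem restrictedLoad_mem_feasible {I J : ℕ} {A : Fin J → Fin I → ℝ} {C : Fin J → ℝ}
    {ν μ : Fin I → ℝ} (hA : ∀ j i, 0 ≤ A j i) (hν : ∀ i, 0 < ν i) (hμ : ∀ i, 0 < μ i)
    (hload : ∀ j, (∑ i, A j i * (ν i / μ i)) ≤ C j) (n : Fin I → ℝ) :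
    (fun i => if 0 < n i then ν i / μ i else 0) ∈ Feasible A C n := by
  have hρ : ∀ i, 0 ≤ ν i / μ i := fun i => (div_pos (hν i) (hμ i)).le
  refine ⟨fun i => ?_, fun i hi => by simp [hi], fun j => le_trans ?_ (hload j)⟩
  · dsimp only
    split_ifs
    exacts [hρ i, le_rfl]
  · refine Finset.sum_le_sum fun i _ => mul_le_mul_of_nonneg_left ?_ (hA j i)
    dsimp only
    split_ifs
    exacts [le_rfl, hρ i]

theorem Gfun_restrictedLoad {I : ℕ} {α : ℝ} {κ ν μ : Fin I → ℝ} (hν : ∀ i, 0 < ν i)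
    (hμ : ∀ i, 0 < μ i) (x : Fin I → ℝ) :
    Gfun α κ x (fun i => if 0 < x i then ν i / μ i else 0) =
      ((∑ i, if 0 < x i then κ i * x i ^ α *
        alphaFairUtility α (if 0 < x i then ν i / μ i else 0) else 0 : ℝ) : EReal) :=
  Gfun_eq_sum_alphaFairUtility fun ⟨_, i, hi, h0⟩ =>
    (div_pos (hν i) (hμ i)).ne' (by simpa [hi] using h0)

theorem IsAlloc.pos_of_one_le {I J : ℕ} {A : Fin J → Fin I → ℝ} {C : Fin J → ℝ} {α : ℝ}
    {κ ν μ x L : Fin I → ℝ} (hA : ∀ j i, 0 ≤ A j i) (hν : ∀ i, 0 < ν i) (hμ : ∀ i, 0 < μ i)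
    (hload : ∀ j, (∑ i, A j i * (ν i / μ i)) ≤ C j) (halloc : IsAlloc A C α κ x L)
    (hα : 1 ≤ α) {i : Fin I} (hi : 0 < x i) : 0 < L i := by
  refine (halloc.1.1 i).lt_of_ne fun h => ?_
  -- a vanishing rate on a busy route gives `G = -∞`, which the restricted load beats
  have hopt := halloc.2 _ (restrictedLoad_mem_feasible hA hν hμ hload x)
  rw [Gfun_restrictedLoad hν hμ, Gfun, if_pos ⟨hα, i, hi, h.symm⟩] at hopt
  exact EReal.coe_ne_bot _ (le_bot_iff.1 hopt)

theorem Kfun_nonpos {I J : ℕ} {A : Fin J → Fin I → ℝ} {C : Fin J → ℝ} {α : ℝ}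
    {κ ν μ : Fin I → ℝ} {Λ : (Fin I → ℝ) → Fin I → ℝ} {x : Fin I → ℝ}
    (hA : ∀ j i, 0 ≤ A j i) (hα : 0 ≤ α) (hκ : ∀ i, 0 < κ i) (hν : ∀ i, 0 < ν i)
    (hμ : ∀ i, 0 < μ i) (hload : ∀ j, (∑ i, A j i * (ν i / μ i)) ≤ C j)
    (halloc : IsAlloc A C α κ x (Λ x)) :
    Kfun α κ ν μ Λ x ≤ 0 := by
  have hρ : ∀ i, 0 < ν i / μ i := fun i => div_pos (hν i) (hμ i)
  have hΛpos : 1 ≤ α → ∀ i, 0 < x i → 0 < Λ x i :=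
    fun hα1 _ hi => halloc.pos_of_one_le hA hν hμ hload hα1 hi
  have hopt := halloc.2 _ (restrictedLoad_mem_feasible hA hν hμ hload x)
  rw [Gfun_restrictedLoad hν hμ, Gfun_eq_sum_alphaFairUtility
    (fun ⟨hα1, i, hi, h0⟩ => (hΛpos hα1 i hi).ne' h0), EReal.coe_le_coe_iff] at hopt
  calc Kfun α κ ν μ Λ x
      ≤ ∑ i, if 0 < x i then κ i * x i ^ α * (alphaFairUtility α (ν i / μ i) -
          alphaFairUtility α (Λ x i)) else 0 := by
        refine Finset.sum_le_sum fun i _ => ?_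
        split_ifs with hi
        · have hpow : (μ i * x i / ν i) ^ α = x i ^ α * (ν i / μ i) ^ (-α) := by
            rw [rpow_neg (hρ i).le, ← div_eq_mul_inv, ← div_rpow hi.le (hρ i).le]
            congr 1
            field_simp
          have := mul_le_mul_of_nonneg_left
            (rpow_neg_mul_sub_le_alphaFairUtility_sub hα (hρ i) (halloc.1.1 i) (hΛpos · i hi))
            (mul_nonneg (hκ i).le (rpow_nonneg hi.le α))
          rw [hpow]
          linarith
        · exact le_rfl
    _ = (∑ i, if 0 < x i then κ i * x i ^ α *
            alphaFairUtility α (if 0 < x i then ν i / μ i else 0) else 0) -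
          ∑ i, if 0 < x i then κ i * x i ^ α * alphaFairUtility α (Λ x i) else 0 := by
        rw [← Finset.sum_sub_distrib]
        refine Finset.sum_congr rfl fun i _ => ?_
        split_ifs <;> ring
    _ ≤ 0 := sub_nonpos.2 hopt

theorem contDiff_Ffun {I : ℕ} {α : ℝ} (hα : 0 ≤ α) (κ ν μ : Fin I → ℝ) :
    ContDiff ℝ 1 (Ffun α κ ν μ) := by
  have hpow : ContDiff ℝ 1 fun y : ℝ => y ^ (α + 1) :=
    contDiff_rpow_const_of_le (by norm_num; linarith)
  unfold Ffun
  fun_prop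

theorem contDiff_wl {I J : ℕ} (A : Fin J → Fin I → ℝ) (μ : Fin I → ℝ) (j : Fin J) :
    ContDiff ℝ 1 fun x => wl A μ x j := by
  unfold wl
  fun_prop

theorem hasDerivAt_Ffun_comp {I : ℕ} {α : ℝ} (hα : 0 ≤ α) (κ : Fin I → ℝ) {ν : Fin I → ℝ}
    (hν : ∀ i, ν i ≠ 0) (μ : Fin I → ℝ) {n : ℝ → Fin I → ℝ} {d : Fin I → ℝ} {t : ℝ}
    (hn : ∀ i, HasDerivAt (fun s => n s i) (d i) t) :
    HasDerivAt (fun s => Ffun α κ ν μ (n s))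
      (∑ i, κ i * μ i ^ (α - 1) * (n t i / ν i) ^ α * d i) t := by
  have hsum := HasDerivAt.fun_sum (u := Finset.univ) fun i _ =>
    ((((hn i).div_const (ν i)).rpow_const (p := α + 1) (Or.inr (by linarith))).const_mul
      (ν i * κ i * μ i ^ (α - 1)))
  refine (hsum.const_mul (1 / (α + 1))).congr_deriv ?_
  rw [Finset.mul_sum]
  refine Finset.sum_congr rfl fun i _ => ?_
  rw [add_sub_cancel_right]
  field_simp [hν i]

theorem hasDerivAt_wl_comp {I J : ℕ} (A : Fin J → Fin I → ℝ) (μ : Fin I → ℝ)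
    {n : ℝ → Fin I → ℝ} {d : Fin I → ℝ} {t : ℝ} (hn : ∀ i, HasDerivAt (fun s => n s i) (d i) t)
    (j : Fin J) :
    HasDerivAt (fun s => wl A μ (n s) j) (∑ i, A j i * d i / μ i) t :=
  HasDerivAt.fun_sum fun i _ => ((hn i).const_mul (A j i)).div_const (μ i)

def fluidDrift {I : ℕ} (ν μ : Fin I → ℝ) (Λ : (Fin I → ℝ) → Fin I → ℝ) (x : Fin I → ℝ)
    (i : Fin I) : ℝ :=
  if 0 < x i then ν i - μ i * Λ x i else 0

theorem sum_mul_fluidDrift_eq_Kfun {I : ℕ} (α : ℝ) (κ : Fin I → ℝ) {ν μ : Fin I → ℝ}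
    (hν : ∀ i, 0 < ν i) (hμ : ∀ i, 0 < μ i) (Λ : (Fin I → ℝ) → Fin I → ℝ) (x : Fin I → ℝ) :
    ∑ i, κ i * μ i ^ (α - 1) * (x i / ν i) ^ α * fluidDrift ν μ Λ x i = Kfun α κ ν μ Λ x := by
  refine Finset.sum_congr rfl fun i _ => ?_
  unfold fluidDrift
  split_ifs with hi
  · have := (hμ i).ne'
    rw [mul_div_assoc, mul_rpow (hμ i).le (div_nonneg hi.le (hν i).le), rpow_sub_one this]
    field_simp
  · rw [mul_zero]

theorem sum_mul_fluidDrift_nonneg {I J : ℕ} {A : Fin J → Fin I → ℝ} {C : Fin J → ℝ}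
    {ν μ : Fin I → ℝ} (hμ : ∀ i, μ i ≠ 0) {Λ : (Fin I → ℝ) → Fin I → ℝ} {x : Fin I → ℝ}
    {j : Fin J} (hj : j ∈ Jstar A C ν μ)
    (hcap : ∑ i, A j i * (if 0 < x i then Λ x i else ν i / μ i) ≤ C j) :
    0 ≤ ∑ i, A j i * fluidDrift ν μ Λ x i / μ i := by
  have hsplit : ∑ i, A j i * fluidDrift ν μ Λ x i / μ i =
      C j - ∑ i, A j i * (if 0 < x i then Λ x i else ν i / μ i) := by
    rw [← (hj : ∑ i, A j i * (ν i / μ i) = C j), ← Finset.sum_sub_distrib]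
    refine Finset.sum_congr rfl fun i _ => ?_
    unfold fluidDrift
    split_ifs
    · field_simp [hμ i]
    · ring
  rw [hsplit]
  linarith

namespace IsFluidSol

variable {I J : ℕ} {A : Fin J → Fin I → ℝ} {C : Fin J → ℝ} {ν μ : Fin I → ℝ}
  {Λ : (Fin I → ℝ) → Fin I → ℝ} {n : ℝ → Fin I → ℝ}

theorem absolutelyContinuousOnInterval (hsol : IsFluidSol A C ν μ Λ n) {s t : ℝ} (hs : 0 ≤ s)
    (ht : 0 ≤ t) : AbsolutelyContinuousOnInterval n s t :=
  absolutelyContinuousOnInterval_pi fun i =>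
    (hsol.1 i).absolutelyContinuousOnInterval_of_nonneg hs ht

theorem ae_hasDerivAt (hsol : IsFluidSol A C ν μ Λ n) :
    ∀ᵐ t, 0 < t → (∀ i, HasDerivAt (fun s => n s i) (fluidDrift ν μ Λ (n t) i) t) ∧
      ∀ j, ∑ i, A j i * (if 0 < n t i then Λ (n t) i else ν i / μ i) ≤ C j := by
  obtain ⟨hac, hnonneg, hreg⟩ := hsol
  filter_upwards [ae_all_iff.2 fun i => (hac i).ae_differentiableAt] with t ht ht0
  obtain ⟨hder, hcap⟩ := hreg t ht0.le fun i => (ht i ht0).differentiableWithinAt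
  refine ⟨fun i => ?_, hcap⟩
  have hnhds : Ici (0 : ℝ) ∈ 𝓝 t := Ici_mem_nhds ht0
  rcases (hnonneg t ht0.le i).lt_or_eq with hpos | hzero
  · simpa [fluidDrift, hpos] using ((hder i).1 hpos).hasDerivAt hnhds
  · simpa [fluidDrift, ← hzero] using ((hder i).2 hzero.symm).hasDerivAt hnhds

theorem Ffun_antitoneOn (hsol : IsFluidSol A C ν μ Λ n) (hA : ∀ j i, 0 ≤ A j i) {α : ℝ}
    (hα : 0 ≤ α) {κ : Fin I → ℝ} (hκ : ∀ i, 0 < κ i) (hν : ∀ i, 0 < ν i) (hμ : ∀ i, 0 < μ i)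
    (hload : ∀ j, (∑ i, A j i * (ν i / μ i)) ≤ C j)
    (hΛ : ∀ x : Fin I → ℝ, (∀ i, 0 ≤ x i) → IsAlloc A C α κ x (Λ x)) :
    AntitoneOn (fun t => Ffun α κ ν μ (n t)) (Ici 0) := by
  intro s hs t ht hst
  have hac := ContDiff.comp_absolutelyContinuousOnInterval (contDiff_Ffun hα κ ν μ)
    (hsol.absolutelyContinuousOnInterval hs ht)
  refine hac.le_of_ae_deriv_nonpos hst ?_
  filter_upwards [hsol.ae_hasDerivAt] with x hx hxst
  have hx0 : 0 < x := lt_of_le_of_lt hs hxst.1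
  have hder := hasDerivAt_Ffun_comp hα κ (fun i => (hν i).ne') μ (hx hx0).1
  rw [sum_mul_fluidDrift_eq_Kfun α κ hν hμ] at hder
  rw [Function.comp_def, hder.deriv]
  exact Kfun_nonpos hA hα hκ hν hμ hload (hΛ _ (hsol.2.1 x hx0.le))

theorem wl_monotoneOn (hsol : IsFluidSol A C ν μ Λ n) (hμ : ∀ i, μ i ≠ 0) {j : Fin J}
    (hj : j ∈ Jstar A C ν μ) : MonotoneOn (fun t => wl A μ (n t) j) (Ici 0) := by
  intro s hs t ht hst
  have hac := ContDiff.comp_absolutelyContinuousOnInterval (contDiff_wl A μ j)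
    (hsol.absolutelyContinuousOnInterval hs ht)
  refine hac.le_of_ae_deriv_nonneg hst ?_
  filter_upwards [hsol.ae_hasDerivAt] with x hx hxst
  obtain ⟨hder, hcap⟩ := hx (lt_of_le_of_lt hs hxst.1)
  rw [Function.comp_def, (hasDerivAt_wl_comp A μ hder j).deriv]
  exact sum_mul_fluidDrift_nonneg hμ hj (hcap j)

end IsFluidSol

theorem wFeasible_subset_of_le {I J : ℕ} {A : Fin J → Fin I → ℝ} {C : Fin J → ℝ}
    {ν μ : Fin I → ℝ} {w w' : Fin J → ℝ} (hw : ∀ j ∈ Jstar A C ν μ, w j ≤ w' j) :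
    WFeasible A C ν μ w' ⊆ WFeasible A C ν μ w :=
  fun _ ⟨hm, hm'⟩ => ⟨hm, fun j hj => (hw j hj).trans (hm' j hj)⟩

theorem wl_nonneg {I J : ℕ} {A : Fin J → Fin I → ℝ} {μ x : Fin I → ℝ} (hA : ∀ j i, 0 ≤ A j i)
    (hμ : ∀ i, 0 < μ i) (hx : ∀ i, 0 ≤ x i) (j : Fin J) : 0 ≤ wl A μ x j :=
  Finset.sum_nonneg fun i _ => div_nonneg (mul_nonneg (hA j i) (hx i)) (hμ i).le

theorem stmt16_general {I J : ℕ}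
    (A : Fin J → Fin I → ℝ) (hA01 : ∀ j i, A j i = 0 ∨ A j i = 1)
    (C : Fin J → ℝ)
    (α : ℝ) (hα : 0 < α) (κ : Fin I → ℝ) (hκ : ∀ i, 0 < κ i)
    (ν μ : Fin I → ℝ) (hν : ∀ i, 0 < ν i) (hμ : ∀ i, 0 < μ i)
    (hload : ∀ j, (∑ i, A j i * (ν i / μ i)) ≤ C j)
    (Λ : (Fin I → ℝ) → Fin I → ℝ)
    (hΛ : ∀ n : Fin I → ℝ, (∀ i, 0 ≤ n i) → IsAlloc A C α κ n (Λ n))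
    (Δ : (Fin J → ℝ) → Fin I → ℝ)
    (hΔ : ∀ w : Fin J → ℝ, (∀ j, 0 ≤ w j) →
      Δ w ∈ WFeasible A C ν μ w ∧
        ∀ m ∈ WFeasible A C ν μ w, Ffun α κ ν μ (Δ w) ≤ Ffun α κ ν μ m)
    (n : ℝ → Fin I → ℝ) (hsol : IsFluidSol A C ν μ Λ n) :
    AntitoneOn (fun t => Ffun α κ ν μ (n t) - Ffun α κ ν μ (Δ (wl A μ (n t))))
      (Ici (0:ℝ)) := by
  have hA : ∀ j i, 0 ≤ A j i := fun j i => (hA01 j i).elim (·.ge) (·.symm ▸ zero_le_one)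
  intro s hs t ht hst
  have hF := hsol.Ffun_antitoneOn hA hα.le hκ hν hμ hload hΛ hs ht hst
  have hw : ∀ j ∈ Jstar A C ν μ, wl A μ (n s) j ≤ wl A μ (n t) j :=
    fun j hj => hsol.wl_monotoneOn (fun i => (hμ i).ne') hj hs ht hst
  obtain ⟨-, hmin⟩ := hΔ _ (wl_nonneg hA hμ (hsol.2.1 s hs))
  obtain ⟨hfeas, -⟩ := hΔ _ (wl_nonneg hA hμ (hsol.2.1 t ht))
  exact sub_le_sub hF (hmin _ (wFeasible_subset_of_le hw hfeas))

theorem stmt16 {I J : ℕ} (hI : 0 < I) (hJ : 0 < J)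
    (A : Fin J → Fin I → ℝ) (hA01 : ∀ j i, A j i = 0 ∨ A j i = 1)
    (hAcol : ∀ i, ∃ j, A j i = 1) (hArank : LinearIndependent ℝ A)
    (C : Fin J → ℝ) (hC : ∀ j, 0 < C j)
    (α : ℝ) (hα : 0 < α) (κ : Fin I → ℝ) (hκ : ∀ i, 0 < κ i)
    (ν μ : Fin I → ℝ) (hν : ∀ i, 0 < ν i) (hμ : ∀ i, 0 < μ i)
    (hload : ∀ j, (∑ i, A j i * (ν i / μ i)) ≤ C j)
    (hJs : (Jstar A C ν μ).Nonempty)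
    (Λ : (Fin I → ℝ) → Fin I → ℝ)
    (hΛ : ∀ n : Fin I → ℝ, (∀ i, 0 ≤ n i) → IsAlloc A C α κ n (Λ n))
    (Δ : (Fin J → ℝ) → Fin I → ℝ)
    (hΔ : ∀ w : Fin J → ℝ, (∀ j, 0 ≤ w j) →
      Δ w ∈ WFeasible A C ν μ w ∧
        ∀ m ∈ WFeasible A C ν μ w, Ffun α κ ν μ (Δ w) ≤ Ffun α κ ν μ m)
    (n : ℝ → Fin I → ℝ) (hsol : IsFluidSol A C ν μ Λ n) :
    AntitoneOn (fun t => Ffun α κ ν μ (n t) - Ffun α κ ν μ (Δ (wl A μ (n t))))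
      (Ici (0:ℝ)) :=
  stmt16_general A hA01 C α hα κ hκ ν μ hν hμ hload Λ hΛ Δ hΔ n hsol
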